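/- arXiv:1101.5587 — 10 statements merged into one kernel-verified Lean document; each statement's English description precedes it below -/
import Mathlib

section
/- Let η be a 1-form on E, R a Reeb field for η, h, f : E → ℝ smooth, X_h an infinitesimal contact transformation for η with η(X_h) = h, and X_f any vector field with η(X_f) = f. Assume h is good, i.e. R h vanishes identically. Then f is a first integral of h (X_h f ≡ 0 on E) if and only if the Jacobi bracket {h,f}_η := η([X_h, X_f]) vanishes identically on E. (This is item (1) of Lemma 3.5 of the paper.) -/
/-- Item (1) of Lemma 3.5: if `h` is good with respect to `η` (i.e. `R h ≡ 0`),
then `f` is a first integral of `h` iff the Jacobi bracket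
`{h,f}_η = η([X_h,X_f])` vanishes identically. -/
theorem stmt_3 {E : Type*} [NormedAddCommGroup E] [NormedSpace ℝ E]
    [FiniteDimensional ℝ E]
    (η : E → (E →L[ℝ] ℝ)) (hη : ContDiff ℝ (⊤ : ℕ∞) η)
    (R : E → E) (hR : ContDiff ℝ (⊤ : ℕ∞) R)
    (hReeb1 : ∀ x, η x (R x) = 1)
    (hReeb2 : ∀ x v, fderiv ℝ η x (R x) v - fderiv ℝ η x v (R x) = 0)
    (h f : E → ℝ) (hh : ContDiff ℝ (⊤ : ℕ∞) h) (hf : ContDiff ℝ (⊤ : ℕ∞) f)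
    (Xh : E → E) (hXh : ContDiff ℝ (⊤ : ℕ∞) Xh)
    (a : E → ℝ)
    (hict : ∀ x v, fderiv ℝ η x (Xh x) v + η x (fderiv ℝ Xh x v) = a x * η x v)
    (hXhham : ∀ x, η x (Xh x) = h x)
    (Xf : E → E) (hXf : ContDiff ℝ (⊤ : ℕ∞) Xf)
    (hXfham : ∀ x, η x (Xf x) = f x)
    -- h is good with respect to η
    (hgood : ∀ x, fderiv ℝ h x (R x) = 0) :
    (∀ x, fderiv ℝ f x (Xh x) = 0) ↔
      (∀ x, η x (fderiv ℝ Xf x (Xh x) - fderiv ℝ Xh x (Xf x)) = 0) := by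
  have key : ∀ (Y : E → E), ContDiff ℝ (⊤ : ℕ∞) Y → ∀ (g : E → ℝ),
      (∀ x, η x (Y x) = g x) → ∀ x v,
      fderiv ℝ g x v = fderiv ℝ η x v (Y x) + η x (fderiv ℝ Y x v) := by
    intro Y hY g hg x v
    have hgeq : g = fun y => η y (Y y) := funext fun y => (hg y).symm
    have hdη : DifferentiableAt ℝ η x := hη.differentiable (by simp) x
    have hdY : DifferentiableAt ℝ Y x := hY.differentiable (by simp) x
    rw [hgeq, fderiv_clm_apply hdη hdY]
    simp [add_comm]
  -- a vanishes
  have a0 : ∀ x, a x = 0 := by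
    intro x
    have h1 := hict x (R x)
    have h2 := key Xh hXh h hXhham x (R x)
    have h3 := hReeb2 x (Xh x)
    have h4 := hgood x
    have h5 := hReeb1 x
    rw [h5, mul_one] at h1
    linarith
  -- main identity
  have main : ∀ x, fderiv ℝ f x (Xh x)
      = η x (fderiv ℝ Xf x (Xh x) - fderiv ℝ Xh x (Xf x)) := by
    intro x
    have h1 := key Xf hXf f hXfham x (Xh x)
    have h2 := hict x (Xf x)
    rw [a0 x, zero_mul] at h2
    rw [map_sub]
    linarith
  constructor
  · intro H x; rw [← main x, H x]
  · intro H x; rw [main x, H x]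
end

section
/- Let η be a 1-form on E, R a Reeb field for η, h, f : E → ℝ smooth, and X_h, X_f infinitesimal contact transformations for η with η(X_h) = h and η(X_f) = f. Assume R h ≡ 0 (h is good) and X_h f ≡ 0 (f is a first integral of h). Then X_f h = (R f) · h everywhere on E. If moreover h(x) ≠ 0 for all x and X_f h ≡ 0 (h and f are mutual first integrals), then R f ≡ 0, i.e. f is good. (These are items (2) and (4) of Lemma 3.5 of the paper.) -/
/-- Items (2) and (4) of Lemma 3.5: if `h` is good and `f` is a first integral
of `h`, then `X_f h = (R f)·h`; if moreover `h` is nowhere zero and `h`, `f`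
are mutual first integrals, then `f` is good. -/
theorem stmt_4 {E : Type*} [NormedAddCommGroup E] [NormedSpace ℝ E]
    [FiniteDimensional ℝ E]
    (η : E → (E →L[ℝ] ℝ)) (hη : ContDiff ℝ (⊤ : ℕ∞) η)
    (R : E → E) (hR : ContDiff ℝ (⊤ : ℕ∞) R)
    (hReeb1 : ∀ x, η x (R x) = 1)
    (hReeb2 : ∀ x v, fderiv ℝ η x (R x) v - fderiv ℝ η x v (R x) = 0)
    (h f : E → ℝ) (hh : ContDiff ℝ (⊤ : ℕ∞) h) (hf : ContDiff ℝ (⊤ : ℕ∞) f)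
    (Xh : E → E) (hXh : ContDiff ℝ (⊤ : ℕ∞) Xh)
    (a : E → ℝ)
    (hicth : ∀ x v, fderiv ℝ η x (Xh x) v + η x (fderiv ℝ Xh x v) = a x * η x v)
    (hXhham : ∀ x, η x (Xh x) = h x)
    (Xf : E → E) (hXf : ContDiff ℝ (⊤ : ℕ∞) Xf)
    (b : E → ℝ)
    (hictf : ∀ x v, fderiv ℝ η x (Xf x) v + η x (fderiv ℝ Xf x v) = b x * η x v)
    (hXfham : ∀ x, η x (Xf x) = f x)
    -- h is good with respect to η
    (hgood : ∀ x, fderiv ℝ h x (R x) = 0)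
    -- f is a first integral of h
    (hfirst : ∀ x, fderiv ℝ f x (Xh x) = 0) :
    (∀ x, fderiv ℝ h x (Xf x) = fderiv ℝ f x (R x) * h x) ∧
      ((∀ x, h x ≠ 0) → (∀ x, fderiv ℝ h x (Xf x) = 0) →
        ∀ x, fderiv ℝ f x (R x) = 0) := by
  have key : ∀ (X : E → E), ContDiff ℝ (⊤ : ℕ∞) X → ∀ (g : E → ℝ), (∀ x, η x (X x) = g x) →
      ∀ x v, fderiv ℝ g x v = fderiv ℝ η x v (X x) + η x (fderiv ℝ X x v) := by
    intro X hX g hg x v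
    have hgeq : g = fun y => η y (X y) := funext fun y => (hg y).symm
    rw [hgeq, fderiv_clm_apply (hη.differentiable (by simp) x)
      (hX.differentiable (by simp) x)]
    simp [ContinuousLinearMap.add_apply]
    ring
  have Dh := key Xh hXh h hXhham
  have Df := key Xf hXf f hXfham
  have ha : ∀ x, a x = 0 := by
    intro x
    have h1 := hgood x
    rw [Dh x (R x)] at h1
    have h2 := hicth x (R x)
    rw [hReeb1 x, mul_one] at h2
    have h3 := hReeb2 x (Xh x)
    linarith
  have hb : ∀ x, fderiv ℝ f x (R x) = b x := by
    intro x
    have h2 := hictf x (R x)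
    rw [hReeb1 x, mul_one] at h2
    have h3 := hReeb2 x (Xf x)
    rw [Df x (R x)]
    linarith
  have main : ∀ x, fderiv ℝ h x (Xf x) = b x * h x := by
    intro x
    have h1 := Dh x (Xf x)
    have h2 := hicth x (Xf x)
    rw [ha x, zero_mul] at h2
    have h3 := hfirst x
    rw [Df x (Xh x)] at h3
    have h4 := hictf x (Xh x)
    rw [hXhham x] at h4
    linarith
  refine ⟨fun x => by rw [main x, hb x], fun hne hXfh x => ?_⟩
  have := main x
  rw [hXfh x] at this
  rcases mul_eq_zero.mp this.symm with hb0 | hh0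
  · rw [hb x, hb0]
  · exact absurd hh0 (hne x)
end

section
/- Let η be a 1-form on E, R a Reeb field for η, h, f : E → ℝ smooth, and X_h, X_f infinitesimal contact transformations for η with η(X_h) = h and η(X_f) = f. Then (dη)_x(X_h x, X_f x) = (X_h f)(x) − (R f)(x) · h(x) for all x ∈ E. In particular, if R f ≡ 0 (f is good), then dη(X_h, X_f) vanishes identically (the span of X_h, X_f is isotropic for dη) if and only if X_h f ≡ 0. (These are items (5) and (6) of Lemma 3.5 of the paper.) -/
/-- Items (5) and (6) of Lemma 3.5:
`dη(X_h, X_f) = X_h f − (R f)·h`; in particular if `f` is good then the span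
of `X_h, X_f` is isotropic for `dη` iff `f` is a first integral of `h`. -/
theorem stmt_5 {E : Type*} [NormedAddCommGroup E] [NormedSpace ℝ E]
    [FiniteDimensional ℝ E]
    (η : E → (E →L[ℝ] ℝ)) (hη : ContDiff ℝ (⊤ : ℕ∞) η)
    (R : E → E) (hR : ContDiff ℝ (⊤ : ℕ∞) R)
    (hReeb1 : ∀ x, η x (R x) = 1)
    (hReeb2 : ∀ x v, fderiv ℝ η x (R x) v - fderiv ℝ η x v (R x) = 0)
    (h f : E → ℝ) (hh : ContDiff ℝ (⊤ : ℕ∞) h) (hf : ContDiff ℝ (⊤ : ℕ∞) f)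
    (Xh : E → E) (hXh : ContDiff ℝ (⊤ : ℕ∞) Xh)
    (a : E → ℝ)
    (hicth : ∀ x v, fderiv ℝ η x (Xh x) v + η x (fderiv ℝ Xh x v) = a x * η x v)
    (hXhham : ∀ x, η x (Xh x) = h x)
    (Xf : E → E) (hXf : ContDiff ℝ (⊤ : ℕ∞) Xf)
    (b : E → ℝ)
    (hictf : ∀ x v, fderiv ℝ η x (Xf x) v + η x (fderiv ℝ Xf x v) = b x * η x v)
    (hXfham : ∀ x, η x (Xf x) = f x) :
    (∀ x, fderiv ℝ η x (Xh x) (Xf x) - fderiv ℝ η x (Xf x) (Xh x) =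
        fderiv ℝ f x (Xh x) - fderiv ℝ f x (R x) * h x) ∧
      ((∀ x, fderiv ℝ f x (R x) = 0) →
        ((∀ x, fderiv ℝ η x (Xh x) (Xf x) - fderiv ℝ η x (Xf x) (Xh x) = 0) ↔
          (∀ x, fderiv ℝ f x (Xh x) = 0))) := by
  -- derivative of f = η(Xf)
  have hfd : ∀ x v, fderiv ℝ f x v = η x (fderiv ℝ Xf x v) + fderiv ℝ η x v (Xf x) := by
    intro x v
    have hfeq : f = fun y => η y (Xf y) := funext fun y => (hXfham y).symm
    rw [hfeq, fderiv_clm_apply (hη.differentiable (by simp) x) (hXf.differentiable (by simp) x)]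
    simp
  have key : ∀ x, fderiv ℝ f x (Xh x) =
      η x (fderiv ℝ Xf x (Xh x)) + fderiv ℝ η x (Xh x) (Xf x) := fun x => hfd x (Xh x)
  have hb : ∀ x, fderiv ℝ f x (R x) = b x := by
    intro x
    have h1 := hfd x (R x)
    have h2 := hReeb2 x (Xf x)
    have h3 := hictf x (R x)
    rw [hReeb1 x, mul_one] at h3
    linarith [h1, h2, h3]
  have main : ∀ x, fderiv ℝ η x (Xh x) (Xf x) - fderiv ℝ η x (Xf x) (Xh x) =
      fderiv ℝ f x (Xh x) - fderiv ℝ f x (R x) * h x := by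
    intro x
    have h3 := hictf x (Xh x)
    rw [hXhham x] at h3
    rw [hb x, key x]
    linarith [h3]
  refine ⟨main, fun hgood => ?_⟩
  constructor
  · intro hiso x
    have := main x
    rw [hgood x, hiso x] at this
    linarith
  · intro hfi x
    rw [main x, hgood x, hfi x]
    ring
end

section
/- Let η be a 1-form on E such that for every x ∈ E the bilinear form (dη)_x is nondegenerate on ker η_x (if v ∈ ker η_x and (dη)_x(v,w) = 0 for all w ∈ ker η_x then v = 0). Let R be a Reeb field for η, h, f : E → ℝ smooth, and X_h, X_f infinitesimal contact transformations for η with η(X_h) = h and η(X_f) = f. If R h ≡ 0 (h is good) and X_h f ≡ 0 (f is a first integral of h), then [X_h, X_f] is identically zero, i.e. X_h and X_f span an Abelian subalgebra. (This is item (7) of Lemma 3.5 of the paper.) -/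
private lemma dapply {E F G : Type*} [NormedAddCommGroup E] [NormedSpace ℝ E]
    [NormedAddCommGroup F] [NormedSpace ℝ F] [NormedAddCommGroup G] [NormedSpace ℝ G]
    {Φ : E → (F →L[ℝ] G)} {V : E → F} {x : E}
    (hΦ : DifferentiableAt ℝ Φ x) (hV : DifferentiableAt ℝ V x) (u : E) :
    fderiv ℝ (fun y => Φ y (V y)) x u = fderiv ℝ Φ x u (V x) + Φ x (fderiv ℝ V x u) := by
  rw [fderiv_clm_apply hΦ hV]
  simp [add_comm]

private lemma dapply_const {E F G : Type*} [NormedAddCommGroup E] [NormedSpace ℝ E]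
    [NormedAddCommGroup F] [NormedSpace ℝ F] [NormedAddCommGroup G] [NormedSpace ℝ G]
    {Φ : E → (F →L[ℝ] G)} {x : E} (hΦ : DifferentiableAt ℝ Φ x) (w : F) (u : E) :
    fderiv ℝ (fun y => Φ y w) x u = fderiv ℝ Φ x u w := by
  rw [dapply hΦ (differentiableAt_const w) u]
  simp

/-- Item (7) of Lemma 3.5: if `h` is good and `f` is a first integral of `h`,
then `[X_h, X_f] = 0`, so `X_h, X_f` span an Abelian subalgebra. -/
theorem stmt_7 {E : Type*} [NormedAddCommGroup E] [NormedSpace ℝ E]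
    [FiniteDimensional ℝ E]
    (η : E → (E →L[ℝ] ℝ)) (hη : ContDiff ℝ (⊤ : ℕ∞) η)
    -- dη is nondegenerate on ker η
    (hnondeg : ∀ x v, η x v = 0 →
      (∀ w, η x w = 0 → fderiv ℝ η x v w - fderiv ℝ η x w v = 0) → v = 0)
    (R : E → E) (hR : ContDiff ℝ (⊤ : ℕ∞) R)
    (hReeb1 : ∀ x, η x (R x) = 1)
    (hReeb2 : ∀ x v, fderiv ℝ η x (R x) v - fderiv ℝ η x v (R x) = 0)
    (h f : E → ℝ) (hh : ContDiff ℝ (⊤ : ℕ∞) h) (hf : ContDiff ℝ (⊤ : ℕ∞) f)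
    (Xh : E → E) (hXh : ContDiff ℝ (⊤ : ℕ∞) Xh)
    (a : E → ℝ)
    (hicth : ∀ x v, fderiv ℝ η x (Xh x) v + η x (fderiv ℝ Xh x v) = a x * η x v)
    (hXhham : ∀ x, η x (Xh x) = h x)
    (Xf : E → E) (hXf : ContDiff ℝ (⊤ : ℕ∞) Xf)
    (b : E → ℝ)
    (hictf : ∀ x v, fderiv ℝ η x (Xf x) v + η x (fderiv ℝ Xf x v) = b x * η x v)
    (hXfham : ∀ x, η x (Xf x) = f x)
    -- h is good with respect to η
    (hgood : ∀ x, fderiv ℝ h x (R x) = 0)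
    -- f is a first integral of h
    (hfirst : ∀ x, fderiv ℝ f x (Xh x) = 0) :
    ∀ x, fderiv ℝ Xf x (Xh x) - fderiv ℝ Xh x (Xf x) = 0 := by
  -- smoothness of derivatives
  have hη1 : ContDiff ℝ (⊤ : ℕ∞) (fderiv ℝ η) := hη.fderiv_right (by simp)
  have hf1 : ContDiff ℝ (⊤ : ℕ∞) (fderiv ℝ f) := hf.fderiv_right (by simp)
  have hh1 : ContDiff ℝ (⊤ : ℕ∞) (fderiv ℝ h) := hh.fderiv_right (by simp)
  have dη : Differentiable ℝ η := hη.differentiable (by simp)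
  have dη1 : Differentiable ℝ (fderiv ℝ η) := hη1.differentiable (by simp)
  have dXh : Differentiable ℝ Xh := hXh.differentiable (by simp)
  have dXf : Differentiable ℝ Xf := hXf.differentiable (by simp)
  have df : Differentiable ℝ f := hf.differentiable (by simp)
  have dh : Differentiable ℝ h := hh.differentiable (by simp)
  have df1 : Differentiable ℝ (fderiv ℝ f) := hf1.differentiable (by simp)
  have dh1 : Differentiable ℝ (fderiv ℝ h) := hh1.differentiable (by simp)
  -- chain rules for h and f
  have hDh : ∀ y u, fderiv ℝ h y u = fderiv ℝ η y u (Xh y) + η y (fderiv ℝ Xh y u) := by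
    intro y u
    have e : h = fun z => η z (Xh z) := funext fun z => (hXhham z).symm
    rw [e, dapply (dη y) (dXh y) u]
  have hDf : ∀ y u, fderiv ℝ f y u = fderiv ℝ η y u (Xf y) + η y (fderiv ℝ Xf y u) := by
    intro y u
    have e : f = fun z => η z (Xf z) := funext fun z => (hXfham z).symm
    rw [e, dapply (dη y) (dXf y) u]
  -- conformal factors
  set bb : E → ℝ := fun y => fderiv ℝ f y (R y) with hbbdef
  have hb : ∀ y, b y = bb y := by
    intro y
    have h1 := hictf y (R y)
    rw [hReeb1 y, mul_one] at h1
    have h2 := hDf y (R y)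
    have h3 := hReeb2 y (Xf y)
    simp only [hbbdef]
    linarith
  have ha : ∀ y, a y = 0 := by
    intro y
    have h1 := hicth y (R y)
    rw [hReeb1 y, mul_one] at h1
    have h2 := hDh y (R y)
    have h3 := hReeb2 y (Xh y)
    have h4 := hgood y
    linarith
  have hA : ∀ y v, fderiv ℝ η y (Xh y) v + η y (fderiv ℝ Xh y v) = 0 := by
    intro y v
    have := hicth y v
    rw [ha y, zero_mul] at this
    exact this
  have hB : ∀ y v, fderiv ℝ η y (Xf y) v + η y (fderiv ℝ Xf y v) = bb y * η y v := by
    intro y v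
    have := hictf y v
    rwa [hb y] at this
  -- contracted Cartan identities
  have hHid : ∀ y v, fderiv ℝ η y (Xh y) v - fderiv ℝ η y v (Xh y) = -(fderiv ℝ h y v) := by
    intro y v
    have h1 := hA y v
    have h2 := hDh y v
    linarith
  have hE : ∀ y v, fderiv ℝ η y (Xf y) v - fderiv ℝ η y v (Xf y)
      = bb y * η y v - fderiv ℝ f y v := by
    intro y v
    have h1 := hB y v
    have h2 := hDf y v
    linarith
  -- η(Z) = 0
  have hZker : ∀ y, η y (fderiv ℝ Xf y (Xh y)) = η y (fderiv ℝ Xh y (Xf y)) := by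
    intro y
    have h1 := hfirst y
    have h2 := hDf y (Xh y)
    have h3 := hA y (Xf y)
    linarith
  -- h's derivative along Xf
  have hbh : ∀ y, fderiv ℝ h y (Xf y) = bb y * h y := by
    intro y
    have h1 := hDh y (Xf y)
    have h2 := hB y (Xh y)
    rw [hXhham y] at h2
    have h3 := hZker y
    linarith
  -- more differentiability
  have dbb : Differentiable ℝ bb := df1.clm_apply (hR.differentiable (by simp))
  have dΘh : Differentiable ℝ (fun y => fderiv ℝ η y (Xh y)) := dη1.clm_apply dXh
  have dΘf : Differentiable ℝ (fun y => fderiv ℝ η y (Xf y)) := dη1.clm_apply dXf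
  intro x
  refine hnondeg x _ ?_ ?_
  · rw [map_sub, hZker x, sub_self]
  intro w hw
  -- differentiability of the auxiliary scalar functions
  have dηw : Differentiable ℝ (fun y => η y w) := dη.clm_apply (differentiable_const w)
  have dT2base : Differentiable ℝ (fun y => fderiv ℝ η y w) :=
    dη1.clm_apply (differentiable_const w)
  have dT1f : Differentiable ℝ (fun y => fderiv ℝ η y (Xf y) w) :=
    dΘf.clm_apply (differentiable_const w)
  have dT2f : Differentiable ℝ (fun y => fderiv ℝ η y w (Xf y)) := dT2base.clm_apply dXf
  have dT1h : Differentiable ℝ (fun y => fderiv ℝ η y (Xh y) w) :=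
    dΘh.clm_apply (differentiable_const w)
  have dT2h : Differentiable ℝ (fun y => fderiv ℝ η y w (Xh y)) := dT2base.clm_apply dXh
  have dK1f : Differentiable ℝ (fun y => fderiv ℝ η y (Xh y) (Xf y)) := dΘh.clm_apply dXf
  have dK2f : Differentiable ℝ (fun y => fderiv ℝ η y (Xf y) (Xh y)) := dΘf.clm_apply dXh
  have dfw : Differentiable ℝ (fun y => fderiv ℝ f y w) :=
    df1.clm_apply (differentiable_const w)
  -- directional derivatives of the building blocks
  have dG1 : ∀ u, fderiv ℝ (fun y => fderiv ℝ η y (Xf y) w) x u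
      = fderiv ℝ (fderiv ℝ η) x u (Xf x) w + fderiv ℝ η x (fderiv ℝ Xf x u) w := by
    intro u
    rw [dapply_const (dΘf x) w u, dapply (dη1 x) (dXf x) u]
    simp [ContinuousLinearMap.add_apply]
  have dG2 : ∀ u, fderiv ℝ (fun y => fderiv ℝ η y w (Xf y)) x u
      = fderiv ℝ (fderiv ℝ η) x u w (Xf x) + fderiv ℝ η x w (fderiv ℝ Xf x u) := by
    intro u
    rw [dapply (dT2base x) (dXf x) u, dapply_const (dη1 x) w u]
  have dH1 : ∀ u, fderiv ℝ (fun y => fderiv ℝ η y (Xh y) w) x u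
      = fderiv ℝ (fderiv ℝ η) x u (Xh x) w + fderiv ℝ η x (fderiv ℝ Xh x u) w := by
    intro u
    rw [dapply_const (dΘh x) w u, dapply (dη1 x) (dXh x) u]
    simp [ContinuousLinearMap.add_apply]
  have dH2 : ∀ u, fderiv ℝ (fun y => fderiv ℝ η y w (Xh y)) x u
      = fderiv ℝ (fderiv ℝ η) x u w (Xh x) + fderiv ℝ η x w (fderiv ℝ Xh x u) := by
    intro u
    rw [dapply (dT2base x) (dXh x) u, dapply_const (dη1 x) w u]
  have dK1 : ∀ u, fderiv ℝ (fun y => fderiv ℝ η y (Xh y) (Xf y)) x u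
      = fderiv ℝ (fderiv ℝ η) x u (Xh x) (Xf x) + fderiv ℝ η x (fderiv ℝ Xh x u) (Xf x)
        + fderiv ℝ η x (Xh x) (fderiv ℝ Xf x u) := by
    intro u
    rw [dapply (dΘh x) (dXf x) u, dapply (dη1 x) (dXh x) u]
    simp [ContinuousLinearMap.add_apply]
  have dK2 : ∀ u, fderiv ℝ (fun y => fderiv ℝ η y (Xf y) (Xh y)) x u
      = fderiv ℝ (fderiv ℝ η) x u (Xf x) (Xh x) + fderiv ℝ η x (fderiv ℝ Xf x u) (Xh x)
        + fderiv ℝ η x (Xf x) (fderiv ℝ Xh x u) := by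
    intro u
    rw [dapply (dΘf x) (dXh x) u, dapply (dη1 x) (dXf x) u]
    simp [ContinuousLinearMap.add_apply]
  have dEta : ∀ u, fderiv ℝ (fun y => η y w) x u = fderiv ℝ η x u w :=
    fun u => dapply_const (dη x) w u
  have dF1 : ∀ u, fderiv ℝ (fun y => fderiv ℝ f y w) x u = fderiv ℝ (fderiv ℝ f) x u w :=
    fun u => dapply_const (df1 x) w u
  have dF2 : ∀ u, fderiv ℝ (fun y => fderiv ℝ f y (Xh y)) x u
      = fderiv ℝ (fderiv ℝ f) x u (Xh x) + fderiv ℝ f x (fderiv ℝ Xh x u) :=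
    fun u => dapply (df1 x) (dXh x) u
  have dH3 : ∀ u, fderiv ℝ (fun y => fderiv ℝ h y (Xf y)) x u
      = fderiv ℝ (fderiv ℝ h) x u (Xf x) + fderiv ℝ h x (fderiv ℝ Xf x u) :=
    fun u => dapply (dh1 x) (dXf x) u
  have dbbmul : ∀ u, fderiv ℝ (fun y => bb y * η y w) x u
      = bb x * fderiv ℝ η x u w + η x w * fderiv ℝ bb x u := by
    intro u
    rw [fderiv_fun_mul (dbb x) (dηw x)]
    simp only [ContinuousLinearMap.add_apply, ContinuousLinearMap.smul_apply, smul_eq_mul]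
    rw [dEta u]
  have dbh : ∀ u, fderiv ℝ (fun y => bb y * h y) x u
      = bb x * fderiv ℝ h x u + h x * fderiv ℝ bb x u := by
    intro u
    rw [fderiv_fun_mul (dbb x) (dh x)]
    simp only [ContinuousLinearMap.add_apply, ContinuousLinearMap.smul_apply, smul_eq_mul]
  -- symmetry of second derivatives
  have hsymη : ∀ u v z, fderiv ℝ (fderiv ℝ η) x u v z = fderiv ℝ (fderiv ℝ η) x v u z := by
    intro u v z
    rw [second_derivative_symmetric (fun y => (dη y).hasFDerivAt) ((dη1 x).hasFDerivAt) u v]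
  have hsymf : ∀ u v, fderiv ℝ (fderiv ℝ f) x u v = fderiv ℝ (fderiv ℝ f) x v u :=
    fun u v => second_derivative_symmetric (fun y => (df y).hasFDerivAt) ((df1 x).hasFDerivAt) u v
  have hsymh : ∀ u v, fderiv ℝ (fderiv ℝ h) x u v = fderiv ℝ (fderiv ℝ h) x v u :=
    fun u v => second_derivative_symmetric (fun y => (dh y).hasFDerivAt) ((dh1 x).hasFDerivAt) u v
  -- differentiate the function identities
  have e1 : (fun y => fderiv ℝ η y (Xf y) w - fderiv ℝ η y w (Xf y))
      = (fun y => bb y * η y w - fderiv ℝ f y w) := funext fun y => hE y w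
  have E1 : fderiv ℝ (fun y => fderiv ℝ η y (Xf y) w - fderiv ℝ η y w (Xf y)) x (Xh x)
      = fderiv ℝ (fun y => bb y * η y w - fderiv ℝ f y w) x (Xh x) := by rw [e1]
  rw [fderiv_fun_sub (dT1f x) (dT2f x), fderiv_fun_sub (show DifferentiableAt ℝ (fun y => bb y * η y w) x from (dbb x).mul (dηw x)) (dfw x)] at E1
  simp only [ContinuousLinearMap.sub_apply] at E1
  rw [dG1 (Xh x), dG2 (Xh x), dbbmul (Xh x), dF1 (Xh x)] at E1
  have e2 : (fun y => fderiv ℝ η y (Xh y) w - fderiv ℝ η y w (Xh y))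
      = (fun y => -(fderiv ℝ h y w)) := funext fun y => hHid y w
  have E2 : fderiv ℝ (fun y => fderiv ℝ η y (Xh y) w - fderiv ℝ η y w (Xh y)) x (Xf x)
      = fderiv ℝ (fun y => -(fderiv ℝ h y w)) x (Xf x) := by rw [e2]
  rw [fderiv_fun_sub (dT1h x) (dT2h x), fderiv_fun_neg] at E2
  simp only [ContinuousLinearMap.sub_apply, ContinuousLinearMap.neg_apply] at E2
  rw [dH1 (Xf x), dH2 (Xf x), dapply_const (dh1 x) w (Xf x)] at E2
  have e3 : (fun y => fderiv ℝ η y (Xh y) (Xf y) - fderiv ℝ η y (Xf y) (Xh y))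
      = (fun y => -(bb y * h y)) := by
    funext y
    have h1 := hHid y (Xf y)
    rw [hbh y] at h1
    exact h1
  have E3 : fderiv ℝ (fun y => fderiv ℝ η y (Xh y) (Xf y) - fderiv ℝ η y (Xf y) (Xh y)) x w
      = fderiv ℝ (fun y => -(bb y * h y)) x w := by rw [e3]
  rw [fderiv_fun_sub (dK1f x) (dK2f x), fderiv_fun_neg] at E3
  simp only [ContinuousLinearMap.sub_apply, ContinuousLinearMap.neg_apply] at E3
  rw [dK1 w, dK2 w, dbh w] at E3
  have e4 : (fun y => fderiv ℝ f y (Xh y)) = (fun _ => (0:ℝ)) := funext hfirst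
  have E4 : fderiv ℝ (fun y => fderiv ℝ f y (Xh y)) x w
      = fderiv ℝ (fun _ : E => (0:ℝ)) x w := by rw [e4]
  rw [fderiv_fun_const, dF2 w] at E4
  simp only [Pi.zero_apply, ContinuousLinearMap.zero_apply] at E4
  have e5 : (fun y => fderiv ℝ h y (Xf y)) = (fun y => bb y * h y) := funext hbh
  have E5 : fderiv ℝ (fun y => fderiv ℝ h y (Xf y)) x w
      = fderiv ℝ (fun y => bb y * h y) x w := by rw [e5]
  rw [dH3 w, dbh w] at E5
  -- pointwise identities at x
  have PT1 := hHid x (fderiv ℝ Xf x w)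
  have PT2 := hE x (fderiv ℝ Xh x w)
  have PT3 : bb x * fderiv ℝ η x (Xh x) w + bb x * η x (fderiv ℝ Xh x w) = 0 := by
    have h0 := hA x w
    linear_combination bb x * h0
  have PT4 : η x w * fderiv ℝ bb x (Xh x) = 0 := by rw [hw, zero_mul]
  have S1 := hsymη (Xh x) (Xf x) w
  have S2 := hsymη (Xh x) w (Xf x)
  have S3 := hsymη (Xf x) w (Xh x)
  have S4 := hsymf (Xh x) w
  have S5 := hsymh (Xf x) w
  simp only [map_sub, ContinuousLinearMap.sub_apply]
  linarith [E1, E2, E3, E4, E5, PT1, PT2, PT3, PT4, S1, S2, S3, S4, S5]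
end

section
/- Let η be a 1-form on E, R a Reeb field for η, f : E → ℝ smooth, and X_f any vector field with η(X_f) = f. Then η_x([R, X_f](x)) = (R f)(x) for all x ∈ E. Consequently, if the Jacobi bracket of the constant function 1 (whose Hamiltonian field is R) with f vanishes identically, i.e. η([R, X_f]) ≡ 0, then R f ≡ 0, i.e. f is good. (This is the local content of Theorem 3.15 of the paper: a completely integrable contact Hamiltonian system of Reeb type is completely good.) -/
/-- Local content of Theorem 3.15: `η([R, X_f]) = R f`, hence if the Jacobi
bracket of the constant function `1` (whose Hamiltonian field is the Reeb
field `R`) with `f` vanishes identically, then `f` is good. -/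
theorem stmt_8 {E : Type*} [NormedAddCommGroup E] [NormedSpace ℝ E]
    [FiniteDimensional ℝ E]
    (η : E → (E →L[ℝ] ℝ)) (hη : ContDiff ℝ (⊤ : ℕ∞) η)
    (R : E → E) (hR : ContDiff ℝ (⊤ : ℕ∞) R)
    (hReeb1 : ∀ x, η x (R x) = 1)
    (hReeb2 : ∀ x v, fderiv ℝ η x (R x) v - fderiv ℝ η x v (R x) = 0)
    (f : E → ℝ) (hf : ContDiff ℝ (⊤ : ℕ∞) f)
    (Xf : E → E) (hXf : ContDiff ℝ (⊤ : ℕ∞) Xf)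
    (hXfham : ∀ x, η x (Xf x) = f x) :
    (∀ x, η x (fderiv ℝ Xf x (R x) - fderiv ℝ R x (Xf x)) = fderiv ℝ f x (R x)) ∧
      ((∀ x, η x (fderiv ℝ Xf x (R x) - fderiv ℝ R x (Xf x)) = 0) →
        ∀ x, fderiv ℝ f x (R x) = 0) := by
  have hηd : Differentiable ℝ η := hη.differentiable (by simp)
  have hRd : Differentiable ℝ R := hR.differentiable (by simp)
  have hXfd : Differentiable ℝ Xf := hXf.differentiable (by simp)
  have main : ∀ x, η x (fderiv ℝ Xf x (R x) - fderiv ℝ R x (Xf x)) = fderiv ℝ f x (R x) := by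
    intro x
    -- derivative of η(Xf) = f
    have h1 : fderiv ℝ f x = (η x).comp (fderiv ℝ Xf x) + (fderiv ℝ η x).flip (Xf x) := by
      have := fderiv_clm_apply (hηd x) (hXfd x)
      rw [← this]
      congr 1
      ext y
      exact (hXfham y).symm
    -- derivative of η(R) = 1 (constant)
    have h2 : (η x).comp (fderiv ℝ R x) + (fderiv ℝ η x).flip (R x) = 0 := by
      have := fderiv_clm_apply (hηd x) (hRd x)
      rw [← this]
      have : (fun y => η y (R y)) = fun _ : E => (1 : ℝ) := funext hReeb1
      rw [this, fderiv_fun_const]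
      rfl
    have h2' : η x (fderiv ℝ R x (Xf x)) + fderiv ℝ η x (Xf x) (R x) = 0 := by
      have := congrArg (fun L : E →L[ℝ] ℝ => L (Xf x)) h2
      simpa using this
    have h1' : fderiv ℝ f x (R x)
        = η x (fderiv ℝ Xf x (R x)) + fderiv ℝ η x (R x) (Xf x) := by
      rw [h1]; rfl
    have h3 := hReeb2 x (Xf x)
    rw [map_sub, h1']
    linarith
  exact ⟨main, fun h x => by rw [← main x, h x]⟩
end

section
/- Let E = ℝⁿ × ℝⁿ × ℝ with points (q,p,z), let η be the standard contact form η_{(q,p,z)}(u,v,w) = w − Σᵢ pᵢuᵢ, and let h : E → ℝ be the coordinate function h(q,p,z) = z. Then for every map R : E → E with η_x(R x) ≠ 0 for all x ∈ E (i.e. R is transverse to the contact distribution D = ker η), one has (R h)(0) = fderiv ℝ h 0 (R 0) ≠ 0; in particular h is not constant along R, so h is not a first integral of the contact Hamiltonian system (E, ker η, η', h) for any contact form η' = f·η with f nowhere vanishing. (This is Proposition 3.3 of the paper: there exist functions h that are not a first integral of their Hamiltonian system for any contact form.) -/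
/-- Proposition 3.3: on `ℝⁿ × ℝⁿ × ℝ` with the standard contact form
`η = dz − Σ pᵢ dqⁱ`, the function `h(q,p,z) = z` satisfies
`(R h)(0) ≠ 0` for every vector field `R` transverse to `ker η`,
so `h` is not a first integral of its Hamiltonian system for any contact
form representing `ker η`. -/
theorem stmt_9 (n : ℕ)
    (η : ((Fin n → ℝ) × (Fin n → ℝ) × ℝ) →
      (((Fin n → ℝ) × (Fin n → ℝ) × ℝ) →L[ℝ] ℝ))
    (hηdef : ∀ x u, η x u = u.2.2 - ∑ i, x.2.1 i * u.1 i)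
    (h : ((Fin n → ℝ) × (Fin n → ℝ) × ℝ) → ℝ)
    (hhdef : ∀ x, h x = x.2.2) :
    ∀ R : ((Fin n → ℝ) × (Fin n → ℝ) × ℝ) → ((Fin n → ℝ) × (Fin n → ℝ) × ℝ),
      (∀ x, η x (R x) ≠ 0) → fderiv ℝ h 0 (R 0) ≠ 0 := by
  intro R hR
  set L : ((Fin n → ℝ) × (Fin n → ℝ) × ℝ) →L[ℝ] ℝ :=
    (ContinuousLinearMap.snd ℝ (Fin n → ℝ) ℝ).comp
      (ContinuousLinearMap.snd ℝ (Fin n → ℝ) ((Fin n → ℝ) × ℝ)) with hL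
  have hfun : h = L := by
    funext x; rw [hhdef]; rfl
  rw [hfun, L.fderiv]
  have : L (R 0) = η 0 (R 0) := by
    rw [hηdef]
    simp [hL]
  rw [this]
  exact hR 0
end

section
/- Let E = ℝ³ with coordinates (x,y,z) and contact form η_{(x,y,z)}(u₁,u₂,u₃) = u₃ − y·u₁ (i.e. η = dz − y dx). Define vector fields X_h(x,y,z) = (1,0,0) and X_f(x,y,z) = (0,y,z). Then: (i) η(X_h) = −y and η(X_f) = z pointwise; (ii) X_h and X_f are infinitesimal contact transformations with L_{X_h}η = 0 and L_{X_f}η = η; (iii) [X_h, X_f] = 0 identically (the Hamiltonians h = −y and f = z are in involution); (iv) (dη)_{(x,y,z)}(X_h(x,y,z), X_f(x,y,z)) = y, so the span of X_h, X_f is not isotropic with respect to dη at any point with y ≠ 0. (This is Example 3.8 of the paper, a completely integrable contact Hamiltonian system that is not completely good.) -/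
noncomputable section

private def L1 : (ℝ × ℝ × ℝ) →L[ℝ] ℝ := ContinuousLinearMap.fst ℝ ℝ (ℝ × ℝ)
private def Ly : (ℝ × ℝ × ℝ) →L[ℝ] ℝ :=
  (ContinuousLinearMap.fst ℝ ℝ ℝ).comp (ContinuousLinearMap.snd ℝ ℝ (ℝ × ℝ))
private def L3 : (ℝ × ℝ × ℝ) →L[ℝ] ℝ :=
  (ContinuousLinearMap.snd ℝ ℝ ℝ).comp (ContinuousLinearMap.snd ℝ ℝ (ℝ × ℝ))
private def S : (ℝ × ℝ × ℝ) →L[ℝ] ((ℝ × ℝ × ℝ) →L[ℝ] ℝ) := Ly.smulRight L1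
private def T : (ℝ × ℝ × ℝ) →L[ℝ] (ℝ × ℝ × ℝ) :=
  (0 : (ℝ × ℝ × ℝ) →L[ℝ] ℝ).prod (ContinuousLinearMap.snd ℝ ℝ (ℝ × ℝ))

/-- Example 3.8: on `ℝ³` with `η = dz − y dx`, the fields `X_h = ∂_x` and
`X_f = y∂_y + z∂_z` have Hamiltonians `−y`, `z`, satisfy `L_{X_h}η = 0`,
`L_{X_f}η = η`, commute, and their span is not isotropic for `dη`
wherever `y ≠ 0`. -/
theorem stmt_11
    (η : (ℝ × ℝ × ℝ) → ((ℝ × ℝ × ℝ) →L[ℝ] ℝ))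
    (hηdef : ∀ p u, η p u = u.2.2 - p.2.1 * u.1)
    (Xh Xf : (ℝ × ℝ × ℝ) → (ℝ × ℝ × ℝ))
    (hXh : ∀ p, Xh p = (1, 0, 0))
    (hXf : ∀ p, Xf p = (0, p.2.1, p.2.2)) :
    -- (i) the contact Hamiltonians are −y and z
    (∀ p, η p (Xh p) = -p.2.1) ∧ (∀ p, η p (Xf p) = p.2.2) ∧
    -- (ii) L_{X_h}η = 0 and L_{X_f}η = η
    (∀ p v, fderiv ℝ η p (Xh p) v + η p (fderiv ℝ Xh p v) = 0) ∧
    (∀ p v, fderiv ℝ η p (Xf p) v + η p (fderiv ℝ Xf p v) = η p v) ∧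
    -- (iii) [X_h, X_f] = 0
    (∀ p, fderiv ℝ Xf p (Xh p) - fderiv ℝ Xh p (Xf p) = 0) ∧
    -- (iv) dη(X_h, X_f) = y
    (∀ p, fderiv ℝ η p (Xh p) (Xf p) - fderiv ℝ η p (Xf p) (Xh p) = p.2.1) := by
  have hη : η = fun p => L3 - S p := by
    funext p
    apply ContinuousLinearMap.ext
    intro u
    simp [hηdef, L3, S, Ly, L1, smul_eq_mul, sub_eq_sub_iff_sub_eq_sub]
  have hdη : ∀ p, fderiv ℝ η p = -S := by
    intro p
    rw [hη, fderiv_const_sub L3, S.fderiv]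
  have hXh' : Xh = fun _ => ((1 : ℝ), (0 : ℝ), (0 : ℝ)) := funext hXh
  have hdXh : ∀ p, fderiv ℝ Xh p = 0 := by
    intro p; rw [hXh']; exact fderiv_const_apply _
  have hXf' : Xf = fun p => T p := by
    funext p; rw [hXf p]; simp [T]
  have hdXf : ∀ p, fderiv ℝ Xf p = T := by
    intro p; rw [hXf']; exact T.fderiv
  refine ⟨?_, ?_, ?_, ?_, ?_, ?_⟩
  · intro p; rw [hηdef, hXh]; simp
  · intro p; rw [hηdef, hXf]; simp
  · intro p v
    rw [hdη, hdXh, hXh]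
    simp [S, Ly, L1, hηdef]
  · intro p v
    rw [hdη, hdXf, hXf]
    simp [S, Ly, L1, T, hηdef]
    ring
  · intro p
    rw [hdXf, hdXh, hXh]
    simp [T]
  · intro p
    rw [hdη, hXh, hXf]
    simp [S, Ly, L1]
end
end

section
/- Let E = ℝⁿ × ℝⁿ × ℝ with points (x,y,z) and Heisenberg contact form η_{(x,y,z)}(u,v,w) = w − Σᵢ yᵢuᵢ (i.e. η = dz − Σᵢ yᵢ dxⁱ). For i = 1,…,n define the vector field Xᵢ(x,y,z) = (−yᵢeᵢ, xᵢeᵢ, (xᵢ² − yᵢ²)/2) (i.e. Xᵢ = xᵢ∂_{yᵢ} − yᵢ∂_{xᵢ} + ½(xᵢ²−yᵢ²)∂_z), and let R = ∂_z = (0,0,1). Then: (i) L_{Xᵢ}η = 0 for each i, and R is a Reeb field for η; (ii) η(Xᵢ)(x,y,z) = (xᵢ² + yᵢ²)/2; (iii) all the fields R, X₁, …, Xₙ pairwise commute; (iv) at every point where (xᵢ,yᵢ) ≠ (0,0) for all i, the n+1 vectors R, X₁, …, Xₙ are linearly independent, and the set of such points is open and dense in E. Hence (E, ker η, η, 1)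 with first integrals η(X₁),…,η(Xₙ) is a completely integrable contact Hamiltonian system of Reeb type. (This makes precise Example 3.9 of the paper on the Heisenberg group.) -/
/-!
Everything is an explicit computation once `η` and `Xᵢ` are differentiated. The form `η` is
affine in the base point, so `dη` is the constant bilinear form `-Σ dyᵢ ∧ dxⁱ`; it kills
`R = ∂_z`, and the `z`-component `(xᵢ² − yᵢ²)/2` of `Xᵢ` is chosen exactly so that `L_{Xᵢ}η = 0`.
The field `Xᵢ` and its derivative only involve the `i`-th coordinates, which makes the fields
commute. On the regular set the `(x, y)`-parts `(−yᵢeᵢ, xᵢeᵢ)` of the `Xᵢ` are nonzero vectors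
with disjoint supports, while that of `R` vanishes, giving linear independence. The regular set
contains `⋂ᵢ {xᵢ ≠ 0}`, a finite intersection of dense open sets.
-/

open ContinuousLinearMap Topology

theorem dense_setOf_forall_ne {X Y ι : Type*} [TopologicalSpace X] [BaireSpace X]
    [TopologicalSpace Y] [T1Space Y] [Countable ι] {f : ι → X → Y}
    (hcont : ∀ i, Continuous (f i)) (hopen : ∀ i, IsOpenMap (f i)) (c : ι → Y)
    [∀ i, (𝓝[≠] c i).NeBot] : Dense {x | ∀ i, f i x ≠ c i} := by
  convert dense_iInter_of_isOpen
    (fun i => isOpen_compl_singleton.preimage (hcont i))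
    (fun i => (dense_compl_singleton (c i)).preimage (hopen i)) using 1
  ext x
  simp

noncomputable section

abbrev HeisSpace (n : ℕ) := (Fin n → ℝ) × (Fin n → ℝ) × ℝ

namespace HeisSpace

variable {n : ℕ}

def xCoord (i : Fin n) : HeisSpace n →L[ℝ] ℝ := proj i ∘L fst ℝ _ _

def yCoord (i : Fin n) : HeisSpace n →L[ℝ] ℝ := proj i ∘L fst ℝ _ _ ∘L snd ℝ _ _

def zCoord : HeisSpace n →L[ℝ] ℝ := snd ℝ _ _ ∘L snd ℝ _ _

@[simp] lemma xCoord_apply (i : Fin n) (p : HeisSpace n) : xCoord i p = p.1 i := rfl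
@[simp] lemma yCoord_apply (i : Fin n) (p : HeisSpace n) : yCoord i p = p.2.1 i := rfl
@[simp] lemma zCoord_apply (p : HeisSpace n) : zCoord p = p.2.2 := rfl

variable (n) in
/-- `-Σ yᵢ dxⁱ`, linear in the base point: `heisForm` is `dz` plus this, so this is its derivative. -/
def heisFormLin : HeisSpace n →L[ℝ] (HeisSpace n →L[ℝ] ℝ) :=
  -∑ i, (yCoord i).smulRight (xCoord i)

@[simp] lemma heisFormLin_apply (w v : HeisSpace n) :
    heisFormLin n w v = -∑ i, w.2.1 i * v.1 i := by
  simp [heisFormLin, sum_apply]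

variable (n) in
def heisForm (p : HeisSpace n) : HeisSpace n →L[ℝ] ℝ := zCoord + heisFormLin n p

lemma heisForm_apply (p u : HeisSpace n) : heisForm n p u = u.2.2 - ∑ i, p.2.1 i * u.1 i := by
  simp [heisForm, sub_eq_add_neg]

lemma fderiv_heisForm (p : HeisSpace n) : fderiv ℝ (heisForm n) p = heisFormLin n :=
  ((heisFormLin n).hasFDerivAt.const_add _).fderiv

def heisField (i : Fin n) (p : HeisSpace n) : HeisSpace n :=
  (Pi.single i (-(p.2.1 i)), Pi.single i (p.1 i), (p.1 i ^ 2 - p.2.1 i ^ 2) / 2)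

def heisFieldDeriv (i : Fin n) (p : HeisSpace n) : HeisSpace n →L[ℝ] HeisSpace n :=
  (single ℝ (fun _ : Fin n => ℝ) i ∘L (-yCoord i)).prod
    ((single ℝ (fun _ : Fin n => ℝ) i ∘L xCoord i).prod (p.1 i • xCoord i - p.2.1 i • yCoord i))

@[simp] lemma heisFieldDeriv_apply (i : Fin n) (p v : HeisSpace n) :
    heisFieldDeriv i p v = (Pi.single i (-(v.2.1 i)), Pi.single i (v.1 i),
      p.1 i * v.1 i - p.2.1 i * v.2.1 i) := by
  simp [heisFieldDeriv, Pi.single_neg]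

lemma hasFDerivAt_heisField (i : Fin n) (p : HeisSpace n) :
    HasFDerivAt (heisField i) (heisFieldDeriv i p) p := by
  have hx := (xCoord i).hasFDerivAt (x := p)
  have hy := (yCoord i).hasFDerivAt (x := p)
  have hz : HasFDerivAt (fun q : HeisSpace n => (q.1 i ^ 2 - q.2.1 i ^ 2) / 2)
      (p.1 i • xCoord i - p.2.1 i • yCoord i) p := by
    refine (((hx.mul hx).sub (hy.mul hy)).mul_const 2⁻¹).congr_fderiv ?_
      |>.congr_of_eventuallyEq ?_
    · refine ContinuousLinearMap.ext fun v => ?_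
      simp; ring
    · filter_upwards with q using by simp [sq, div_eq_mul_inv]
  have hxy : HasFDerivAt (fun q : HeisSpace n => Pi.single i (q.1 i))
      (single ℝ (fun _ : Fin n => ℝ) i ∘L xCoord i) p := (single ℝ (fun _ : Fin n => ℝ) i ∘L xCoord i).hasFDerivAt
  have hyx : HasFDerivAt (fun q : HeisSpace n => Pi.single i (-q.2.1 i))
      (single ℝ (fun _ : Fin n => ℝ) i ∘L (-yCoord i)) p := (single ℝ (fun _ : Fin n => ℝ) i ∘L (-yCoord i)).hasFDerivAt
  exact hyx.prodMk (hxy.prodMk hz)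

lemma fderiv_heisField (i : Fin n) (p : HeisSpace n) :
    fderiv ℝ (heisField i) p = heisFieldDeriv i p :=
  (hasFDerivAt_heisField i p).fderiv

lemma lieDeriv_heisForm_heisField (i : Fin n) (p v : HeisSpace n) :
    fderiv ℝ (heisForm n) p (heisField i p) v + heisForm n p (fderiv ℝ (heisField i) p v) = 0 := by
  rw [fderiv_heisForm, fderiv_heisField, heisForm_apply]
  simp [heisField, Pi.single_apply]

lemma heisForm_heisField (i : Fin n) (p : HeisSpace n) :
    heisForm n p (heisField i p) = (p.1 i ^ 2 + p.2.1 i ^ 2) / 2 := by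
  simp [heisForm_apply, heisField, Pi.single_apply]
  ring

lemma heisFieldDeriv_heisField_comm (i j : Fin n) (p : HeisSpace n) :
    heisFieldDeriv j p (heisField i p) = heisFieldDeriv i p (heisField j p) := by
  rcases eq_or_ne i j with rfl | hij
  · rfl
  · simp [heisField, hij, hij.symm]

variable (n) in
def reeb : HeisSpace n := (0, 0, 1)

lemma heisForm_reeb (p : HeisSpace n) : heisForm n p (reeb n) = 1 := by
  simp [heisForm_apply, reeb]

lemma heisFormLin_reeb_sub (v : HeisSpace n) :
    heisFormLin n (reeb n) v - heisFormLin n v (reeb n) = 0 := by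
  simp [reeb]

lemma heisFieldDeriv_reeb (i : Fin n) (p : HeisSpace n) : heisFieldDeriv i p (reeb n) = 0 := by
  simp [reeb]

lemma sum_smul_heisField (c : Fin n → ℝ) (p : HeisSpace n) :
    ∑ i, c i • heisField i p = (fun j => -(c j * p.2.1 j), fun j => c j * p.1 j,
      ∑ i, c i * ((p.1 i ^ 2 - p.2.1 i ^ 2) / 2)) := by
  ext j <;> simp [heisField, Prod.fst_sum, Prod.snd_sum, Finset.sum_apply, Pi.single_apply]

variable (n) in
def regularSet : Set (HeisSpace n) := {p | ∀ i, ¬(p.1 i = 0 ∧ p.2.1 i = 0)}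

lemma linearIndependent_reeb_heisField {p : HeisSpace n} (hp : p ∈ regularSet n) :
    LinearIndependent ℝ fun o : Option (Fin n) => o.elim (reeb n) fun i => heisField i p := by
  rw [Fintype.linearIndependent_iff]
  intro g hg
  simp only [Fintype.sum_option, Option.elim, sum_smul_heisField] at hg
  have hsome : ∀ j, g (some j) = 0 := by
    intro j
    have hx := congrFun (congrArg (·.1) hg) j
    have hy := congrFun (congrArg (·.2.1) hg) j
    simp [reeb] at hx hy
    have := hp j
    tauto
  have hnone := congrArg (·.2.2) hg
  simp [reeb, hsome] at hnone
  rintro (_ | j)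
  · exact hnone
  · exact hsome j

lemma isOpen_regularSet : IsOpen (regularSet n) := by
  simp only [regularSet, Set.ofPred_forall]
  exact isOpen_iInter_of_finite fun i =>
    ((isClosed_eq (by fun_prop) continuous_const).inter
      (isClosed_eq (by fun_prop) continuous_const)).isOpen_compl

lemma dense_regularSet : Dense (regularSet n) := by
  refine (dense_setOf_forall_ne (f := fun i (p : HeisSpace n) => p.1 i) (fun i => by fun_prop)
    (fun i => (isOpenMap_eval i).comp isOpenMap_fst) 0).mono ?_
  exact fun p hp i h => hp i h.1

end HeisSpace

end

open HeisSpace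

/-- Example 3.9 (Heisenberg group): on `ℝⁿ × ℝⁿ × ℝ` with
`η = dz − Σ yᵢ dxⁱ`, the fields `Xᵢ = xᵢ∂_{yᵢ} − yᵢ∂_{xᵢ} + ½(xᵢ²−yᵢ²)∂_z`
preserve `η`, have Hamiltonians `(xᵢ²+yᵢ²)/2`, commute with each other and
with the Reeb field `R = ∂_z`, and together with `R` are linearly independent
on the open dense set where `(xᵢ,yᵢ) ≠ (0,0)` for all `i`: a completely
integrable contact Hamiltonian system of Reeb type. -/
theorem stmt_14 (n : ℕ)
    (η : ((Fin n → ℝ) × (Fin n → ℝ) × ℝ) →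
      (((Fin n → ℝ) × (Fin n → ℝ) × ℝ) →L[ℝ] ℝ))
    (hηdef : ∀ p u, η p u = u.2.2 - ∑ i, p.2.1 i * u.1 i)
    (X : Fin n → ((Fin n → ℝ) × (Fin n → ℝ) × ℝ) →
      ((Fin n → ℝ) × (Fin n → ℝ) × ℝ))
    (hXdef : ∀ i p, X i p =
      (Pi.single i (-(p.2.1 i)), Pi.single i (p.1 i),
        (p.1 i ^ 2 - p.2.1 i ^ 2) / 2))
    (R : ((Fin n → ℝ) × (Fin n → ℝ) × ℝ) → ((Fin n → ℝ) × (Fin n → ℝ) × ℝ))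
    (hRdef : ∀ p, R p = (0, 0, 1)) :
    -- (i) L_{Xᵢ}η = 0 and R is a Reeb field for η
    (∀ (i : Fin n) p v,
      fderiv ℝ η p (X i p) v + η p (fderiv ℝ (X i) p v) = 0) ∧
    (∀ p, η p (R p) = 1) ∧
    (∀ p v, fderiv ℝ η p (R p) v - fderiv ℝ η p v (R p) = 0) ∧
    -- (ii) η(Xᵢ) = (xᵢ² + yᵢ²)/2
    (∀ (i : Fin n) p, η p (X i p) = (p.1 i ^ 2 + p.2.1 i ^ 2) / 2) ∧
    -- (iii) all the fields R, X₁, …, Xₙ pairwise commute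
    (∀ (i j : Fin n) p,
      fderiv ℝ (X j) p (X i p) - fderiv ℝ (X i) p (X j p) = 0) ∧
    (∀ (i : Fin n) p, fderiv ℝ (X i) p (R p) - fderiv ℝ R p (X i p) = 0) ∧
    -- (iv) linear independence on an open dense set
    (∀ p, (∀ i, ¬(p.1 i = 0 ∧ p.2.1 i = 0)) →
      LinearIndependent ℝ fun o : Option (Fin n) =>
        o.elim (R p) fun i => X i p) ∧
    IsOpen {p : (Fin n → ℝ) × (Fin n → ℝ) × ℝ |
      ∀ i, ¬(p.1 i = 0 ∧ p.2.1 i = 0)} ∧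
    Dense {p : (Fin n → ℝ) × (Fin n → ℝ) × ℝ |
      ∀ i, ¬(p.1 i = 0 ∧ p.2.1 i = 0)} := by
  obtain rfl : η = heisForm n :=
    funext fun p => ContinuousLinearMap.ext fun u => by rw [hηdef, heisForm_apply]
  obtain rfl : X = heisField := funext fun i => funext (hXdef i)
  obtain rfl : R = fun _ => reeb n := funext hRdef
  refine ⟨lieDeriv_heisForm_heisField, heisForm_reeb, fun p v => ?_, heisForm_heisField,
    fun i j p => ?_, fun i p => ?_, fun p => linearIndependent_reeb_heisField,
    isOpen_regularSet, dense_regularSet⟩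
  · rw [fderiv_heisForm, heisFormLin_reeb_sub]
  · rw [fderiv_heisField, fderiv_heisField, heisFieldDeriv_heisField_comm, sub_self]
  · rw [fderiv_heisField, heisFieldDeriv_reeb, fderiv_fun_const, Pi.zero_apply, zero_apply,
      sub_zero]
end

section
/- Let η be a 1-form on E with η_x ≠ 0 for every x ∈ E, and let X, Y be infinitesimal contact transformations for η with conformal factors a and b respectively, such that [X,Y] = 0 identically. Then X b = Y a everywhere on E, and the lifted vector fields on E × ℝ defined by X̂(x,r) = (X x, −a(x)·r/2) and Ŷ(x,r) = (Y x, −b(x)·r/2) satisfy [X̂, Ŷ] = 0 identically. (This is the lifting claim used in the proof of Proposition 3.10 of the paper: an Abelian subalgebra of infinitesimal contact transformations lifts to an Abelian subalgebra of vector fields on the symplectization C(M) = M × ℝ⁺.) -/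
open ContinuousLinearMap

section helpers
variable {E : Type*} [NormedAddCommGroup E] [NormedSpace ℝ E]

/-- Derivative of the infinitesimal contact transformation identity. -/
lemma deriv_of_ict (η : E → (E →L[ℝ] ℝ)) (X : E → E) (a : E → ℝ)
    (hη : Differentiable ℝ η) (hη' : Differentiable ℝ (fderiv ℝ η))
    (hX : Differentiable ℝ X) (hX' : Differentiable ℝ (fderiv ℝ X))
    (ha : Differentiable ℝ a)
    (hict : ∀ x v, fderiv ℝ η x (X x) v + η x (fderiv ℝ X x v) = a x * η x v)
    (x w v : E) :
    fderiv ℝ (fderiv ℝ η) x w (X x) v + fderiv ℝ η x (fderiv ℝ X x w) v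
      + fderiv ℝ η x w (fderiv ℝ X x v) + η x (fderiv ℝ (fderiv ℝ X) x w v)
      = fderiv ℝ a x w * η x v + a x * (fderiv ℝ η x w v) := by
  have hc : HasFDerivAt (fun z => fderiv ℝ η z (X z))
      ((fderiv ℝ η x).comp (fderiv ℝ X x) + (fderiv ℝ (fderiv ℝ η) x).flip (X x)) x :=
    (hη' x).hasFDerivAt.clm_apply (hX x).hasFDerivAt
  have h1 : HasFDerivAt (fun z => fderiv ℝ η z (X z) v)
      (((fderiv ℝ η x) (X x)).comp (0 : E →L[ℝ] E) +
        ((fderiv ℝ η x).comp (fderiv ℝ X x) + (fderiv ℝ (fderiv ℝ η) x).flip (X x)).flip v) x :=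
    hc.clm_apply (hasFDerivAt_const v x)
  have hu : HasFDerivAt (fun z => fderiv ℝ X z v)
      ((fderiv ℝ X x).comp (0 : E →L[ℝ] E) + (fderiv ℝ (fderiv ℝ X) x).flip v) x :=
    (hX' x).hasFDerivAt.clm_apply (hasFDerivAt_const v x)
  have h2 : HasFDerivAt (fun z => η z (fderiv ℝ X z v))
      ((η x).comp ((fderiv ℝ X x).comp (0 : E →L[ℝ] E) + (fderiv ℝ (fderiv ℝ X) x).flip v) +
        (fderiv ℝ η x).flip (fderiv ℝ X x v)) x :=
    (hη x).hasFDerivAt.clm_apply hu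
  have hv : HasFDerivAt (fun z => η z v)
      ((η x).comp (0 : E →L[ℝ] E) + (fderiv ℝ η x).flip v) x :=
    (hη x).hasFDerivAt.clm_apply (hasFDerivAt_const v x)
  have h3 : HasFDerivAt (fun z => a z * η z v)
      (a x • ((η x).comp (0 : E →L[ℝ] E) + (fderiv ℝ η x).flip v) + η x v • fderiv ℝ a x) x :=
    (ha x).hasFDerivAt.mul hv
  have heq : (fun z => fderiv ℝ η z (X z) v + η z (fderiv ℝ X z v))
      = fun z => a z * η z v := funext fun z => hict z v
  have h12 : HasFDerivAt (fun z => fderiv ℝ η z (X z) v + η z (fderiv ℝ X z v)) _ x :=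
    h1.add h2
  rw [heq] at h12
  have := h12.unique h3
  have happ := congrArg (fun (L : E →L[ℝ] ℝ) => L w) this
  simp only [add_apply, comp_apply, flip_apply, coe_comp', Function.comp_apply,
    zero_apply, map_zero, smul_apply, smul_eq_mul, coe_smul', Pi.smul_apply, zero_add,
    add_zero] at happ
  linear_combination happ

/-- Derivative of the commuting condition. -/
lemma deriv_of_comm (X Y : E → E)
    (hX : Differentiable ℝ X) (hX' : Differentiable ℝ (fderiv ℝ X))
    (hY : Differentiable ℝ Y) (hY' : Differentiable ℝ (fderiv ℝ Y))
    (hcomm : ∀ x, fderiv ℝ Y x (X x) - fderiv ℝ X x (Y x) = 0)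
    (x v : E) :
    fderiv ℝ (fderiv ℝ Y) x v (X x) + fderiv ℝ Y x (fderiv ℝ X x v)
      - fderiv ℝ (fderiv ℝ X) x v (Y x) - fderiv ℝ X x (fderiv ℝ Y x v) = 0 := by
  have h1 : HasFDerivAt (fun z => fderiv ℝ Y z (X z))
      ((fderiv ℝ Y x).comp (fderiv ℝ X x) + (fderiv ℝ (fderiv ℝ Y) x).flip (X x)) x :=
    (hY' x).hasFDerivAt.clm_apply (hX x).hasFDerivAt
  have h2 : HasFDerivAt (fun z => fderiv ℝ X z (Y z))
      ((fderiv ℝ X x).comp (fderiv ℝ Y x) + (fderiv ℝ (fderiv ℝ X) x).flip (Y x)) x :=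
    (hX' x).hasFDerivAt.clm_apply (hY x).hasFDerivAt
  have h12 : HasFDerivAt (fun z => fderiv ℝ Y z (X z) - fderiv ℝ X z (Y z)) _ x :=
    h1.sub h2
  have heq : (fun z => fderiv ℝ Y z (X z) - fderiv ℝ X z (Y z)) = fun _ => (0 : E) :=
    funext fun z => hcomm z
  rw [heq] at h12
  have := h12.unique (hasFDerivAt_const (0 : E) x)
  have happ := congrArg (fun (L : E →L[ℝ] E) => L v) this
  simp only [sub_apply, add_apply, comp_apply, flip_apply, coe_comp', Function.comp_apply,
    zero_apply] at happ
  linear_combination (norm := abel) happ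

end helpers

/-- The lifting claim in the proof of Proposition 3.10: if `X`, `Y` are
commuting infinitesimal contact transformations with conformal factors
`a`, `b`, then `X b = Y a`, and the lifted fields
`X̂(x,r) = (X x, −a(x)r/2)`, `Ŷ(x,r) = (Y x, −b(x)r/2)` on `E × ℝ`
commute. -/
theorem stmt_15 {E : Type*} [NormedAddCommGroup E] [NormedSpace ℝ E]
    [FiniteDimensional ℝ E]
    (η : E → (E →L[ℝ] ℝ)) (hη : ContDiff ℝ (⊤ : ℕ∞) η)
    (hηne : ∀ x, η x ≠ 0)
    (X Y : E → E) (hX : ContDiff ℝ (⊤ : ℕ∞) X) (hY : ContDiff ℝ (⊤ : ℕ∞) Y)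
    (a b : E → ℝ) (ha : ContDiff ℝ (⊤ : ℕ∞) a) (hb : ContDiff ℝ (⊤ : ℕ∞) b)
    (hictX : ∀ x v, fderiv ℝ η x (X x) v + η x (fderiv ℝ X x v) = a x * η x v)
    (hictY : ∀ x v, fderiv ℝ η x (Y x) v + η x (fderiv ℝ Y x v) = b x * η x v)
    (hcomm : ∀ x, fderiv ℝ Y x (X x) - fderiv ℝ X x (Y x) = 0) :
    (∀ x, fderiv ℝ b x (X x) = fderiv ℝ a x (Y x)) ∧
      (∀ p : E × ℝ,
        fderiv ℝ (fun q : E × ℝ => ((Y q.1, -b q.1 * q.2 / 2) : E × ℝ)) p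
            ((X p.1, -a p.1 * p.2 / 2) : E × ℝ) -
          fderiv ℝ (fun q : E × ℝ => ((X q.1, -a q.1 * q.2 / 2) : E × ℝ)) p
            ((Y p.1, -b p.1 * p.2 / 2) : E × ℝ) = 0) := by
  have hηd : Differentiable ℝ η := hη.differentiable (by simp)
  have hXd : Differentiable ℝ X := hX.differentiable (by simp)
  have hYd : Differentiable ℝ Y := hY.differentiable (by simp)
  have had : Differentiable ℝ a := ha.differentiable (by simp)
  have hbd : Differentiable ℝ b := hb.differentiable (by simp)
  have hη'd : Differentiable ℝ (fderiv ℝ η) :=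
    (hη.fderiv_right (m := 1) (by exact WithTop.coe_le_coe.mpr le_top)).differentiable one_ne_zero
  have hX'd : Differentiable ℝ (fderiv ℝ X) :=
    (hX.fderiv_right (m := 1) (by exact WithTop.coe_le_coe.mpr le_top)).differentiable one_ne_zero
  have hY'd : Differentiable ℝ (fderiv ℝ Y) :=
    (hY.fderiv_right (m := 1) (by exact WithTop.coe_le_coe.mpr le_top)).differentiable one_ne_zero
  have Sη : ∀ (x v w : E), fderiv ℝ (fderiv ℝ η) x v w = fderiv ℝ (fderiv ℝ η) x w v :=
    fun x v w =>
      second_derivative_symmetric (fun y => (hηd y).hasFDerivAt) (hη'd x).hasFDerivAt v w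
  have SX : ∀ (x v w : E), fderiv ℝ (fderiv ℝ X) x v w = fderiv ℝ (fderiv ℝ X) x w v :=
    fun x v w =>
      second_derivative_symmetric (fun y => (hXd y).hasFDerivAt) (hX'd x).hasFDerivAt v w
  have SY : ∀ (x v w : E), fderiv ℝ (fderiv ℝ Y) x v w = fderiv ℝ (fderiv ℝ Y) x w v :=
    fun x v w =>
      second_derivative_symmetric (fun y => (hYd y).hasFDerivAt) (hY'd x).hasFDerivAt v w
  have part1 : ∀ x, fderiv ℝ b x (X x) = fderiv ℝ a x (Y x) := by
    intro x
    obtain ⟨v, hv⟩ : ∃ v, η x v ≠ 0 := by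
      by_contra h
      push_neg at h
      exact hηne x (ContinuousLinearMap.ext h)
    have hA := deriv_of_ict η X a hηd hη'd hXd hX'd had hictX x (Y x) v
    have hB := deriv_of_ict η Y b hηd hη'd hYd hY'd hbd hictY x (X x) v
    have hC0 := deriv_of_comm X Y hXd hX'd hYd hY'd hcomm x v
    have hC := congrArg (η x) hC0
    simp only [map_add, map_sub, map_zero] at hC
    have hSe := congrArg (fun L : E →L[ℝ] ℝ => L v) (Sη x (Y x) (X x))
    have hcx : fderiv ℝ Y x (X x) = fderiv ℝ X x (Y x) := sub_eq_zero.mp (hcomm x)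
    have hhc := congrArg (fun u => fderiv ℝ η x u v) hcx
    have hSX := congrArg (η x) (SX x (Y x) v)
    have hSY := congrArg (η x) (SY x (X x) v)
    have hDX := hictX x v
    have hDY := hictY x v
    have hDXv := hictX x (fderiv ℝ Y x v)
    have hDYv := hictY x (fderiv ℝ X x v)
    have key : (fderiv ℝ a x (Y x) - fderiv ℝ b x (X x)) * η x v = 0 := by
      linear_combination -hA + hB + hSe - hhc + hSX - hSY - hC + b x * hDX - a x * hDY
        - hDXv + hDYv
    rcases mul_eq_zero.mp key with h | h
    · linarith [h]
    · exact absurd h hv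
  refine ⟨part1, fun p => ?_⟩
  have hrw : ∀ (c : E → ℝ) (Z : E → E),
      (fun q : E × ℝ => ((Z q.1, -c q.1 * q.2 / 2) : E × ℝ))
        = fun q : E × ℝ => ((Z q.1, -c q.1 * q.2 * (2 : ℝ)⁻¹) : E × ℝ) := by
    intro c Z
    funext q
    rw [div_eq_mul_inv]
  have hF : ∀ (c : E → ℝ) (Z : E → E), Differentiable ℝ c → Differentiable ℝ Z →
      HasFDerivAt (fun q : E × ℝ => ((Z q.1, -c q.1 * q.2 * (2 : ℝ)⁻¹) : E × ℝ))
        (((fderiv ℝ Z p.1).comp (fst ℝ E ℝ)).prod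
          ((2 : ℝ)⁻¹ • ((-c p.1) • (snd ℝ E ℝ) +
            p.2 • (-((fderiv ℝ c p.1).comp (fst ℝ E ℝ)))))) p := by
    intro c Z hcd hZd
    have h1 : HasFDerivAt (fun q : E × ℝ => Z q.1) ((fderiv ℝ Z p.1).comp (fst ℝ E ℝ)) p :=
      (hZd p.1).hasFDerivAt.comp p hasFDerivAt_fst
    have h2 : HasFDerivAt (fun q : E × ℝ => -c q.1)
        (-((fderiv ℝ c p.1).comp (fst ℝ E ℝ))) p :=
      ((hcd p.1).hasFDerivAt.comp p hasFDerivAt_fst).neg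
    have h3 := (h2.mul (hasFDerivAt_snd (p := p))).mul_const (2 : ℝ)⁻¹
    exact HasFDerivAt.prodMk h1 h3
  rw [hrw b Y, hrw a X, (hF b Y hbd hYd).fderiv, (hF a X had hXd).fderiv]
  have h1 := hcomm p.1
  have h2 := part1 p.1
  simp only [prod_apply, coe_comp', Function.comp_apply, coe_fst', coe_snd', smul_apply,
    add_apply, neg_apply, smul_eq_mul, Prod.mk_sub_mk, Prod.mk_eq_zero]
  constructor
  · exact h1
  · linear_combination (-p.2 / 2) * h2
end

section
/- Let p, q be natural numbers with 0 < q < p, and let Z ⊆ ℂ⁴ be the set of z = (z₁,z₂,z₃,z₄) with (p−q)·|z₁|² + (p+q)·|z₂|² = 1/2 and |z₃|² + |z₄|² = 1/(2p). The circle group {w ∈ ℂ : |w| = 1} acts on ℂ⁴ by w • z = (w^{p−q}·z₁, w^{p+q}·z₂, w^{−p}·z₃, w^{−p}·z₄) (integer powers). Then this action restricted to Z is free — i.e. for every w with |w| = 1 and every z ∈ Z, w • z = z implies w = 1 — if and only if gcd(p,q) = 1. (This is the freeness claim in Section 4.1 of the paper, used in the contact reduction of S⁷ producing the toric contact structures Y^{p,q}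 on S² × S³.) -/
/-!
Write `n` for the order of `w`, so that `w ^ m * z = z` exactly when `n ∣ m` or `z = 0`.
On `Z` some `z₃, z₄` and some `z₁, z₂` are nonzero, so a fixed point of `w` forces `n ∣ p` and
`n ∣ p ∓ q`, hence `n ∣ gcd(p, q)`; when the gcd is `1` this gives `w = 1`. Conversely a
primitive `gcd(p, q)`-th root of unity fixes every point of `Z` with `z₁ = z₄ = 0`, since
`gcd(p, q)` divides both `p + q` and `p`.
-/

theorem zpow_mul_eq_self_iff {M : Type*} [CommGroupWithZero M] (w z : M) (m : ℤ) :
    w ^ m * z = z ↔ (orderOf w : ℤ) ∣ m ∨ z = 0 := by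
  rw [mul_left_eq_self₀, (IsPrimitiveRoot.orderOf w).zpow_eq_one_iff_dvd]

theorem Complex.exists_norm_sq_eq {r : ℝ} (hr : 0 ≤ r) : ∃ z : ℂ, ‖z‖ ^ 2 = r :=
  ⟨(√r : ℂ), by rw [Complex.norm_real, Real.norm_eq_abs, sq_abs, Real.sq_sqrt hr]⟩

theorem ne_zero_or_ne_zero_of_norm_sq {E : Type*} [NormedAddCommGroup E] {a b c : ℝ}
    {x y : E} (hc : c ≠ 0) (h : a * ‖x‖ ^ 2 + b * ‖y‖ ^ 2 = c) : x ≠ 0 ∨ y ≠ 0 := by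
  contrapose! hc
  simp [← h, hc.1, hc.2]

theorem dvd_gcd_of_fixed_point {p q n : ℕ} (hp : 0 < p) {z₁ z₂ z₃ z₄ : ℂ}
    (hZ₁₂ : ((p : ℝ) - q) * ‖z₁‖ ^ 2 + ((p : ℝ) + q) * ‖z₂‖ ^ 2 = 1 / 2)
    (hZ₃₄ : ‖z₃‖ ^ 2 + ‖z₄‖ ^ 2 = 1 / (2 * p))
    (h₁ : (n : ℤ) ∣ (p : ℤ) - q ∨ z₁ = 0) (h₂ : (n : ℤ) ∣ (p : ℤ) + q ∨ z₂ = 0)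
    (h₃ : (n : ℤ) ∣ -(p : ℤ) ∨ z₃ = 0) (h₄ : (n : ℤ) ∣ -(p : ℤ) ∨ z₄ = 0) :
    n ∣ Nat.gcd p q := by
  have hdvd_p : (n : ℤ) ∣ p := by
    rw [← dvd_neg]
    rcases ne_zero_or_ne_zero_of_norm_sq (a := 1) (b := 1) (c := 1 / (2 * p))
      (by positivity) (by simpa using hZ₃₄) with hz | hz
    · exact h₃.resolve_right hz
    · exact h₄.resolve_right hz
  have hdvd_q : (n : ℤ) ∣ q := by
    rcases ne_zero_or_ne_zero_of_norm_sq (by norm_num) hZ₁₂ with hz | hz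
    · exact (dvd_sub_right hdvd_p).mp (h₁.resolve_right hz)
    · exact (dvd_add_right hdvd_p).mp (h₂.resolve_right hz)
  exact Nat.dvd_gcd (by exact_mod_cast hdvd_p) (by exact_mod_cast hdvd_q)

theorem stmt_17_general (p q : ℕ) (hqp : q < p) :
    (∀ w : ℂ, ‖w‖ = 1 →
      ∀ z₁ z₂ z₃ z₄ : ℂ,
        ((p : ℝ) - q) * ‖z₁‖ ^ 2 +
          ((p : ℝ) + q) * ‖z₂‖ ^ 2 = 1 / 2 →
        ‖z₃‖ ^ 2 + ‖z₄‖ ^ 2 = 1 / (2 * p) →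
        (w ^ ((p : ℤ) - q) * z₁ = z₁ ∧ w ^ ((p : ℤ) + q) * z₂ = z₂ ∧
          w ^ (-(p : ℤ)) * z₃ = z₃ ∧ w ^ (-(p : ℤ)) * z₄ = z₄) →
        w = 1) ↔ Nat.gcd p q = 1 := by
  have hp : 0 < p := Nat.zero_lt_of_lt hqp
  simp only [zpow_mul_eq_self_iff]
  constructor
  · intro hfree
    have hd : Nat.gcd p q ≠ 0 := (Nat.gcd_pos_of_pos_left q hp).ne'
    obtain ⟨ζ, hζ⟩ : ∃ ζ : ℂ, IsPrimitiveRoot ζ (Nat.gcd p q) :=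
      ⟨_, Complex.isPrimitiveRoot_exp _ hd⟩
    have hdvd_p : (orderOf ζ : ℤ) ∣ p :=
      Int.natCast_dvd_natCast.mpr (hζ.eq_orderOf ▸ Nat.gcd_dvd_left p q)
    have hdvd_q : (orderOf ζ : ℤ) ∣ q :=
      Int.natCast_dvd_natCast.mpr (hζ.eq_orderOf ▸ Nat.gcd_dvd_right p q)
    have hpq : ((p : ℝ) + q) ≠ 0 := by positivity
    obtain ⟨b, hb⟩ := Complex.exists_norm_sq_eq (r := 1 / (2 * ((p : ℝ) + q))) (by positivity)
    obtain ⟨c, hc⟩ := Complex.exists_norm_sq_eq (r := 1 / (2 * (p : ℝ))) (by positivity)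
    have hζ1 := hfree ζ (hζ.norm'_eq_one hd) 0 b c 0
      (by rw [hb, norm_zero]; field_simp; ring) (by rw [hc, norm_zero]; ring)
      ⟨.inr rfl, .inl (dvd_add hdvd_p hdvd_q), .inl hdvd_p.neg_right, .inr rfl⟩
    simpa [hζ1] using hζ.eq_orderOf
  · rintro hgcd w - z₁ z₂ z₃ z₄ hZ₁₂ hZ₃₄ ⟨h₁, h₂, h₃, h₄⟩
    have hw := dvd_gcd_of_fixed_point hp hZ₁₂ hZ₃₄ h₁ h₂ h₃ h₄
    rwa [hgcd, Nat.dvd_one, orderOf_eq_one_iff] at hw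

/-- Section 4.1: the circle action
`w • z = (w^{p−q}z₁, w^{p+q}z₂, w^{−p}z₃, w^{−p}z₄)` restricted to the zero
set `Z` of the moment map (given by the two displayed equations) is free if
and only if `gcd(p,q) = 1`. -/
theorem stmt_17 (p q : ℕ) (hq : 0 < q) (hqp : q < p) :
    (∀ w : ℂ, ‖w‖ = 1 →
      ∀ z₁ z₂ z₃ z₄ : ℂ,
        ((p : ℝ) - q) * ‖z₁‖ ^ 2 +
          ((p : ℝ) + q) * ‖z₂‖ ^ 2 = 1 / 2 →
        ‖z₃‖ ^ 2 + ‖z₄‖ ^ 2 = 1 / (2 * p) →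
        (w ^ ((p : ℤ) - q) * z₁ = z₁ ∧ w ^ ((p : ℤ) + q) * z₂ = z₂ ∧
          w ^ (-(p : ℤ)) * z₃ = z₃ ∧ w ^ (-(p : ℤ)) * z₄ = z₄) →
        w = 1) ↔ Nat.gcd p q = 1 :=
  stmt_17_general p q hqp
end
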